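/- Let n ≥ 2, let d₁,…,d_n ∈ ℝ, and let U ⊆ ℝⁿ be an open set all of whose points have pairwise distinct and nonzero coordinates u¹,…,uⁿ. Let β_ij (i ≠ j) be smooth functions on U satisfying (ED1) ∂_k β_ij = β_ik β_kj for pairwise distinct i,j,k; (ED2) e(β_ij) = 0; and (ED3) E(β_ij) = (d_i − d_j − 1) β_ij. Let H₁,…,H_n be smooth nowhere-vanishing functions on U satisfying (L1) ∂_j H_i = β_ij H_j for i ≠ j; (L2) e(H_i) = 0; and (L3) E(H_i) = d_i H_i. Define Christoffel symbols Γ^i_{jk} on U by: Γ^i_{jk} = 0 for pairwise distinct i,j,k; Γ^i_{ij} = (H_j/H_i) β_ij for i ≠ j; Γ^i_{jj} = −(u^i/u^j) Γ^i_{ij} for i ≠ j; Γ^i_{ii} = −Σ_{l≠i} (u^l/u^i) Γ^i_{li} − 1/u^i. Then the curvature tensor R^i_{jkl} := ∂_k Γ^i_{lj} − ∂_l Γ^i_{kj} + Σ_m (Γ^i_{km} Γ^m_{lj} − Γ^i_{lm} Γ^m_{kj}) vanishes identically on U. -/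

import Mathlib

/-- Partial derivative `∂_i f` of a function `f : ℝⁿ → ℝ` at `x`. -/
noncomputable def pd {n : ℕ} (i : Fin n) (f : (Fin n → ℝ) → ℝ) (x : Fin n → ℝ) : ℝ :=
  fderiv ℝ f x (Pi.single i 1)

/-- Christoffel symbols `Γ^i_{jk}` of the dual connection built from rotation
coefficients `β` and Lamé coefficients `H`. -/
noncomputable def GammaDual {n : ℕ} (β : Fin n → Fin n → (Fin n → ℝ) → ℝ)
    (H : Fin n → (Fin n → ℝ) → ℝ) (i j k : Fin n) (x : Fin n → ℝ) : ℝ :=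
  if i = j then
    if j = k then
      -(∑ l ∈ Finset.univ.erase i, (x l / x i) * ((H l x / H i x) * β i l x)) - 1 / x i
    else (H k x / H i x) * β i k x
  else if i = k then (H j x / H i x) * β i j x
  else if j = k then -((x i / x j) * ((H j x / H i x) * β i j x))
  else 0

section Toolbox
variable {n : ℕ} {f g : (Fin n → ℝ) → ℝ} {x : Fin n → ℝ} {i k : Fin n}

lemma pd_const (c : ℝ) : pd k (fun _ => c) x = 0 := by simp [pd]

lemma pd_add (hf : DifferentiableAt ℝ f x) (hg : DifferentiableAt ℝ g x) :
    pd k (fun y => f y + g y) x = pd k f x + pd k g x := by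
  simp [pd, fderiv_fun_add hf hg]

lemma pd_sub (hf : DifferentiableAt ℝ f x) (hg : DifferentiableAt ℝ g x) :
    pd k (fun y => f y - g y) x = pd k f x - pd k g x := by
  simp [pd, fderiv_fun_sub hf hg]

lemma pd_neg : pd k (fun y => -f y) x = -pd k f x := by
  simp [pd, fderiv_neg]

lemma pd_mul (hf : DifferentiableAt ℝ f x) (hg : DifferentiableAt ℝ g x) :
    pd k (fun y => f y * g y) x = pd k f x * g x + f x * pd k g x := by
  simp [pd, fderiv_fun_mul hf hg]; ring

lemma pd_inv (hg : DifferentiableAt ℝ g x) (h0 : g x ≠ 0) :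
    pd k (fun y => (g y)⁻¹) x = -pd k g x / (g x)^2 := by
  have h := (hasFDerivAt_inv' (𝕜 := ℝ) h0).comp x hg.hasFDerivAt
  have h2 : HasFDerivAt (fun y => (g y)⁻¹)
      ((-((ContinuousLinearMap.mulLeftRight ℝ ℝ) (g x)⁻¹) (g x)⁻¹).comp (fderiv ℝ g x)) x := h
  rw [pd, h2.fderiv]
  simp only [ContinuousLinearMap.coe_comp', Function.comp_apply, ContinuousLinearMap.neg_apply,
    ContinuousLinearMap.mulLeftRight_apply, pd]
  rw [eq_div_iff (pow_ne_zero 2 h0), pow_two]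
  field_simp

lemma diff_div (hf : DifferentiableAt ℝ f x) (hg : DifferentiableAt ℝ g x) (h0 : g x ≠ 0) :
    DifferentiableAt ℝ (fun y => f y / g y) x := by
  simp only [div_eq_mul_inv]
  exact hf.mul (hg.inv h0)

lemma pd_div (hf : DifferentiableAt ℝ f x) (hg : DifferentiableAt ℝ g x) (h0 : g x ≠ 0) :
    pd k (fun y => f y / g y) x = (pd k f x * g x - f x * pd k g x) / (g x)^2 := by
  simp only [div_eq_mul_inv]
  rw [pd_mul (g := fun y => (g y)⁻¹) hf (hg.inv h0), pd_inv hg h0]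
  field_simp
  ring

lemma pd_coord (m : Fin n) : pd k (fun y => y m) x = if m = k then 1 else 0 := by
  have : (fun y : Fin n → ℝ => y m) = (ContinuousLinearMap.proj m : (Fin n → ℝ) →L[ℝ] ℝ) := rfl
  rw [pd, this, ContinuousLinearMap.fderiv]
  simp [Pi.single_apply]

lemma pd_sum {s : Finset (Fin n)} {F : Fin n → (Fin n → ℝ) → ℝ}
    (hF : ∀ m ∈ s, DifferentiableAt ℝ (F m) x) :
    pd k (fun y => ∑ m ∈ s, F m y) x = ∑ m ∈ s, pd k (F m) x := by
  simp [pd, fderiv_fun_sum hF]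

lemma diff_coord (m : Fin n) : DifferentiableAt ℝ (fun y : Fin n → ℝ => y m) x := by
  have h : (fun y : Fin n → ℝ => y m) = (ContinuousLinearMap.proj m : (Fin n → ℝ) →L[ℝ] ℝ) := rfl
  rw [h]
  exact (ContinuousLinearMap.proj m : (Fin n → ℝ) →L[ℝ] ℝ).differentiableAt

end Toolbox

/-- `γ_{ij} = (H_j/H_i) β_{ij}`, the essential off-diagonal Christoffel symbol. -/
noncomputable def gam {n : ℕ} (β : Fin n → Fin n → (Fin n → ℝ) → ℝ)
    (H : Fin n → (Fin n → ℝ) → ℝ) (i j : Fin n) : (Fin n → ℝ) → ℝ :=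
  fun x => H j x / H i x * β i j x

/-- Pointwise data at a point `x`: everything needed for the curvature computation. -/
structure PtData {n : ℕ} (β : Fin n → Fin n → (Fin n → ℝ) → ℝ)
    (H : Fin n → (Fin n → ℝ) → ℝ) (DD : Fin n → ℝ) (x : Fin n → ℝ) : Prop where
  hHd : ∀ a, DifferentiableAt ℝ (H a) x
  hβd : ∀ a b, a ≠ b → DifferentiableAt ℝ (β a b) x
  hH0 : ∀ a, H a x ≠ 0
  hx0 : ∀ a, x a ≠ 0
  hpdH : ∀ a b, a ≠ b → pd b (H a) x = β a b x * H b x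
  hpdβ : ∀ a b c, a ≠ b → b ≠ c → a ≠ c → pd c (β a b) x = β a c x * β c b x
  hEH : ∀ a, ∑ l, x l * pd l (H a) x = (DD a) * H a x
  hEβ : ∀ a b, a ≠ b → ∑ l, x l * pd l (β a b) x = (DD a - DD b - 1) * β a b x

section GamLemmas
variable {n : ℕ} {β : Fin n → Fin n → (Fin n → ℝ) → ℝ} {H : Fin n → (Fin n → ℝ) → ℝ}
  {DD : Fin n → ℝ} {x : Fin n → ℝ} {i j k l : Fin n}

lemma PtData.diff_gam (D : PtData β H DD x) (hij : i ≠ j) :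
    DifferentiableAt ℝ (gam β H i j) x :=
  (diff_div (D.hHd j) (D.hHd i) (D.hH0 i)).mul (D.hβd i j hij)

lemma PtData.pd_gam (D : PtData β H DD x) (hij : i ≠ j) (l : Fin n) :
    pd l (gam β H i j) x =
      ((pd l (H j) x * H i x - H j x * pd l (H i) x) / (H i x)^2) * β i j x
        + (H j x / H i x) * pd l (β i j) x := by
  unfold gam
  rw [pd_mul (diff_div (D.hHd j) (D.hHd i) (D.hH0 i)) (D.hβd i j hij),
    pd_div (D.hHd j) (D.hHd i) (D.hH0 i)]

/-- Darboux-type equation for γ at distinct indices. -/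
lemma PtData.pd_gam_ne (D : PtData β H DD x) (hij : i ≠ j) (hki : k ≠ i) (hkj : k ≠ j) :
    pd k (gam β H i j) x =
      gam β H i j x * gam β H j k x + gam β H i k x * gam β H k j x
        - gam β H i j x * gam β H i k x := by
  rw [D.pd_gam hij k, D.hpdH j k (Ne.symm hkj), D.hpdH i k (Ne.symm hki),
    D.hpdβ i j k hij (Ne.symm hkj) (Ne.symm hki)]
  unfold gam
  have h1 := D.hH0 i; have h2 := D.hH0 j; have h3 := D.hH0 k
  field_simp
  ring

/-- Euler-type identity `E(γ_{ij}) = -γ_{ij}`. -/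
lemma PtData.E_gam (D : PtData β H DD x) (hij : i ≠ j) :
    ∑ m, x m * pd m (gam β H i j) x = -gam β H i j x := by
  have h : ∀ m : Fin n, x m * pd m (gam β H i j) x =
      (β i j x * H i x / (H i x)^2) * (x m * pd m (H j) x)
        - (β i j x * H j x / (H i x)^2) * (x m * pd m (H i) x)
        + (H j x / H i x) * (x m * pd m (β i j) x) := by
    intro m
    rw [D.pd_gam hij m]
    ring
  rw [Finset.sum_congr rfl (fun m _ => h m)]
  rw [Finset.sum_add_distrib, Finset.sum_sub_distrib, ← Finset.mul_sum, ← Finset.mul_sum,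
    ← Finset.mul_sum, D.hEH i, D.hEH j, D.hEβ i j hij]
  unfold gam
  have h1 := D.hH0 i; have h2 := D.hH0 j
  field_simp
  ring

end GamLemmas

section GDLemmas
variable {n : ℕ} {β : Fin n → Fin n → (Fin n → ℝ) → ℝ} {H : Fin n → (Fin n → ℝ) → ℝ}
  {DD : Fin n → ℝ} {x : Fin n → ℝ} {i j k l : Fin n}

lemma GD_off (hij : i ≠ j) (hik : i ≠ k) (hjk : j ≠ k) :
    GammaDual β H i j k = fun _ => 0 := by
  funext y; simp [GammaDual, hij, hik, hjk]

lemma GD_iik (hik : i ≠ k) : GammaDual β H i i k = gam β H i k := by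
  funext y; simp [GammaDual, gam, hik]

lemma GD_iji (hij : i ≠ j) : GammaDual β H i j i = gam β H i j := by
  funext y; simp [GammaDual, gam, hij.symm, hij]

lemma GD_ijj (hij : i ≠ j) :
    GammaDual β H i j j = fun y => -(y i / y j * gam β H i j y) := by
  funext y; simp [GammaDual, gam, hij, hij.symm]

lemma GD_iii : GammaDual β H i i i
    = fun y => -(∑ m ∈ Finset.univ.erase i, y m / y i * gam β H i m y) - 1 / y i := by
  funext y; simp [GammaDual, gam]

/-- Sum splitting: pull one index out of a universal sum. -/
lemma sum_split1 (i : Fin n) (f : Fin n → ℝ) :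
    ∑ m, f m = f i + ∑ m ∈ Finset.univ.erase i, f m :=
  (Finset.add_sum_erase _ f (Finset.mem_univ i)).symm

lemma sum_split2 (hik : i ≠ k) (f : Fin n → ℝ) :
    ∑ m, f m = f i + f k + ∑ m ∈ (Finset.univ.erase i).erase k, f m := by
  rw [sum_split1 i f, add_assoc,
    ← Finset.add_sum_erase _ f (Finset.mem_erase.mpr ⟨Ne.symm hik, Finset.mem_univ k⟩)]

lemma sum_split3 (hik : i ≠ k) (hil : i ≠ l) (hkl : k ≠ l) (f : Fin n → ℝ) :
    ∑ m, f m = f i + f k + f l + ∑ m ∈ ((Finset.univ.erase i).erase k).erase l, f m := by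
  rw [sum_split2 hik f, add_assoc,
    ← Finset.add_sum_erase _ f (Finset.mem_erase.mpr ⟨Ne.symm hkl,
      Finset.mem_erase.mpr ⟨Ne.symm hil, Finset.mem_univ l⟩⟩)]
  ring

lemma PtData.pd_Gjj (D : PtData β H DD x) (hij : i ≠ j) (l : Fin n) :
    pd l (fun y => -(y i / y j * gam β H i j y)) x
      = -((((if i = l then (1:ℝ) else 0) * x j - x i * (if j = l then (1:ℝ) else 0))
            / (x j)^2) * gam β H i j x + (x i / x j) * pd l (gam β H i j) x) := by
  rw [pd_neg (f := fun y => y i / y j * gam β H i j y)]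
  rw [pd_mul (diff_div (diff_coord i) (diff_coord j) (D.hx0 j)) (D.diff_gam hij),
    pd_div (diff_coord i) (diff_coord j) (D.hx0 j), pd_coord, pd_coord]

lemma PtData.pd_Gii (D : PtData β H DD x) (hli : l ≠ i) :
    pd l (fun y => -(∑ m ∈ Finset.univ.erase i, y m / y i * gam β H i m y) - 1 / y i) x
      = -((gam β H i l x + ∑ m ∈ Finset.univ.erase i, x m * pd l (gam β H i m) x) / x i) := by
  have hdiffsummand : ∀ m ∈ Finset.univ.erase i,
      DifferentiableAt ℝ (fun y => y m / y i * gam β H i m y) x := by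
    intro m hm
    have hmi : m ≠ i := (Finset.mem_erase.mp hm).1
    exact (diff_div (diff_coord m) (diff_coord i) (D.hx0 i)).mul (D.diff_gam (Ne.symm hmi))
  rw [pd_sub ((DifferentiableAt.fun_sum hdiffsummand).fun_neg)
      (diff_div (differentiableAt_const 1) (diff_coord i) (D.hx0 i)),
    pd_neg (f := fun y => ∑ m ∈ Finset.univ.erase i, y m / y i * gam β H i m y),
    pd_sum hdiffsummand,
    pd_div (differentiableAt_const 1) (diff_coord i) (D.hx0 i), pd_const, pd_coord]
  rw [if_neg (Ne.symm hli)]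
  have hterm : ∀ m ∈ Finset.univ.erase i,
      pd l (fun y => y m / y i * gam β H i m y) x
        = (if m = l then gam β H i m x / x i else 0) + (x m * pd l (gam β H i m) x) / x i := by
    intro m hm
    have hmi : m ≠ i := (Finset.mem_erase.mp hm).1
    rw [pd_mul (diff_div (diff_coord m) (diff_coord i) (D.hx0 i)) (D.diff_gam (Ne.symm hmi)),
      pd_div (diff_coord m) (diff_coord i) (D.hx0 i), pd_coord, pd_coord,
      if_neg (Ne.symm hli)]
    have h0 := D.hx0 i
    by_cases hml : m = l
    · rw [if_pos hml, if_pos hml]; field_simp; ring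
    · rw [if_neg hml, if_neg hml]; field_simp; ring
  rw [Finset.sum_congr rfl hterm, Finset.sum_add_distrib, Finset.sum_ite_eq',
    if_pos (Finset.mem_erase.mpr ⟨hli, Finset.mem_univ l⟩), ← Finset.sum_div]
  have h0 := D.hx0 i
  field_simp
  ring

end GDLemmas

section CaseLemmas
variable {n : ℕ} {β : Fin n → Fin n → (Fin n → ℝ) → ℝ} {H : Fin n → (Fin n → ℝ) → ℝ}
  {DD : Fin n → ℝ} {x : Fin n → ℝ} {i j k l : Fin n}

lemma GDv_off (hij : i ≠ j) (hik : i ≠ k) (hjk : j ≠ k) : GammaDual β H i j k x = 0 := by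
  rw [GD_off hij hik hjk]

lemma GDv_iik (hik : i ≠ k) : GammaDual β H i i k x = gam β H i k x := by rw [GD_iik hik]

lemma GDv_iji (hij : i ≠ j) : GammaDual β H i j i x = gam β H i j x := by rw [GD_iji hij]

lemma GDv_ijj (hij : i ≠ j) :
    GammaDual β H i j j x = -(x i / x j * gam β H i j x) := by rw [GD_ijj hij]

lemma GDv_iii (hx0 : x i ≠ 0) : GammaDual β H i i i x
    = -(((∑ m ∈ Finset.univ.erase i, x m * gam β H i m x) + 1) / x i) := by
  simp only [GD_iii]
  have h : ∀ m ∈ Finset.univ.erase i, x m / x i * gam β H i m x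
      = x m * gam β H i m x / x i := fun m _ => by ring
  rw [Finset.sum_congr rfl h, ← Finset.sum_div]
  field_simp
  ring

lemma sum_split_erase (hli : l ≠ i) (f : Fin n → ℝ) :
    ∑ m ∈ Finset.univ.erase i, f m = f l + ∑ m ∈ (Finset.univ.erase i).erase l, f m :=
  (Finset.add_sum_erase _ f (Finset.mem_erase.mpr ⟨hli, Finset.mem_univ l⟩)).symm

/-- Case A: all four indices distinct. -/
lemma caseA (D : PtData β H DD x) (hij : i ≠ j) (hik : i ≠ k) (hil : i ≠ l)
    (hjk : j ≠ k) (hjl : j ≠ l) (hkl : k ≠ l) :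
    pd k (GammaDual β H i l j) x - pd l (GammaDual β H i k j) x
      + ∑ m, (GammaDual β H i k m x * GammaDual β H m l j x
          - GammaDual β H i l m x * GammaDual β H m k j x) = 0 := by
  rw [GD_off hil hij (Ne.symm hjl), GD_off hik hij (Ne.symm hjk), pd_const, pd_const]
  rw [Finset.sum_eq_zero]
  · ring
  intro m _
  by_cases hmi : m = i
  · subst hmi
    rw [GDv_off hil hij (Ne.symm hjl), GDv_off hik hij (Ne.symm hjk)]; ring
  by_cases hmk : m = k
  · subst hmk
    rw [GDv_off hkl (Ne.symm hjk) (Ne.symm hjl), GDv_off hil hik (Ne.symm hkl)]; ring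
  by_cases hml : m = l
  · subst hml
    rw [GDv_off hik hil hkl, GDv_off (Ne.symm hkl) (Ne.symm hjl) (Ne.symm hjk)]; ring
  · rw [GDv_off hik (Ne.symm hmi) (fun h => hmk h.symm),
      GDv_off hil (Ne.symm hmi) (fun h => hml h.symm)]
    ring

/-- Case B: `i = j`, with `i, k, l` distinct. -/
lemma caseB (D : PtData β H DD x) (hik : i ≠ k) (hil : i ≠ l) (hkl : k ≠ l) :
    pd k (GammaDual β H i l i) x - pd l (GammaDual β H i k i) x
      + ∑ m, (GammaDual β H i k m x * GammaDual β H m l i x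
          - GammaDual β H i l m x * GammaDual β H m k i x) = 0 := by
  rw [GD_iji hil, GD_iji hik,
    D.pd_gam_ne hil (Ne.symm hik) hkl,
    D.pd_gam_ne hik (Ne.symm hil) (Ne.symm hkl)]
  rw [Finset.sum_eq_zero]
  · ring
  intro m _
  by_cases hmi : m = i
  · subst hmi
    rw [GDv_iji hik, GDv_iji hil]; ring
  by_cases hmk : m = k
  · subst hmk
    rw [GDv_off hkl (Ne.symm hik) (Ne.symm hil), GDv_off hil hik (Ne.symm hkl)]; ring
  by_cases hml : m = l
  · subst hml
    rw [GDv_off hik hil hkl, GDv_off (Ne.symm hkl) (Ne.symm hil) (Ne.symm hik)]; ring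
  · rw [GDv_off hik (Ne.symm hmi) (fun h => hmk h.symm),
      GDv_off hil (Ne.symm hmi) (fun h => hml h.symm)]
    ring

/-- Case C: `k = i`, with `i, j, l` distinct. -/
lemma caseC (D : PtData β H DD x) (hij : i ≠ j) (hil : i ≠ l) (hjl : j ≠ l) :
    pd i (GammaDual β H i l j) x - pd l (GammaDual β H i i j) x
      + ∑ m, (GammaDual β H i i m x * GammaDual β H m l j x
          - GammaDual β H i l m x * GammaDual β H m i j x) = 0 := by
  rw [GD_off hil hij (Ne.symm hjl), pd_const, GD_iik hij,
    D.pd_gam_ne hij (Ne.symm hil) (Ne.symm hjl)]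
  rw [sum_split3 hij hil hjl]
  rw [Finset.sum_eq_zero (fun m hm => by
    obtain ⟨hml, hmj, hmi, -⟩ :
        m ≠ l ∧ m ≠ j ∧ m ≠ i ∧ m ∈ Finset.univ := by
      simpa [Finset.mem_erase] using hm
    rw [GDv_off hil (Ne.symm hmi) (fun h => hml h.symm),
      GDv_off hml hmj (Ne.symm hjl)]
    ring)]
  rw [GDv_iji hjl, GDv_iik hil, GDv_iik (Ne.symm hjl), GDv_ijj hil,
    GDv_off (Ne.symm hil) (Ne.symm hjl) hij, GDv_off hil hij (Ne.symm hjl),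
    GDv_iik hij, GDv_iji hil]
  ring

/-- Case D: `k = j`, with `i, j, l` distinct. -/
lemma caseD (D : PtData β H DD x) (hij : i ≠ j) (hil : i ≠ l) (hjl : j ≠ l) :
    pd j (GammaDual β H i l j) x - pd l (GammaDual β H i j j) x
      + ∑ m, (GammaDual β H i j m x * GammaDual β H m l j x
          - GammaDual β H i l m x * GammaDual β H m j j x) = 0 := by
  rw [GD_off hil hij (Ne.symm hjl), pd_const, GD_ijj hij, D.pd_Gjj hij l,
    if_neg hil, if_neg hjl, D.pd_gam_ne hij (Ne.symm hil) (Ne.symm hjl)]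
  rw [sum_split3 hij hil hjl]
  rw [Finset.sum_eq_zero (fun m hm => by
    obtain ⟨hml, hmj, hmi, -⟩ :
        m ≠ l ∧ m ≠ j ∧ m ≠ i ∧ m ∈ Finset.univ := by
      simpa [Finset.mem_erase] using hm
    rw [GDv_off hij (Ne.symm hmi) (fun h => hmj h.symm),
      GDv_off hil (Ne.symm hmi) (fun h => hml h.symm)]
    ring)]
  rw [GDv_iji hjl, GDv_off hij hil hjl, GDv_iik (Ne.symm hjl), GDv_ijj hil,
    GDv_ijj (Ne.symm hjl), GDv_off hil hij (Ne.symm hjl), GDv_ijj hij,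
    GDv_iji hij, GDv_iji hil]
  have h1 := D.hx0 j; have h2 := D.hx0 l
  field_simp
  ring

/-- Case E: `j = k = i`, `l ≠ i`. -/
lemma caseE (D : PtData β H DD x) (hil : i ≠ l) :
    pd i (GammaDual β H i l i) x - pd l (GammaDual β H i i i) x
      + ∑ m, (GammaDual β H i i m x * GammaDual β H m l i x
          - GammaDual β H i l m x * GammaDual β H m i i x) = 0 := by
  rw [GD_iji hil, GD_iii, sum_split2 hil]
  have hrest0 : ∑ m ∈ (Finset.univ.erase i).erase l,
      (GammaDual β H i i m x * GammaDual β H m l i x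
        - GammaDual β H i l m x * GammaDual β H m i i x) = 0 := by
    refine Finset.sum_eq_zero (fun m hm => ?_)
    obtain ⟨hml, hmi, -⟩ : m ≠ l ∧ m ≠ i ∧ m ∈ Finset.univ := by
      simpa [Finset.mem_erase] using hm
    rw [GDv_off hml hmi (Ne.symm hil), GDv_off hil (Ne.symm hmi) (fun h => hml h.symm)]
    ring
  rw [hrest0, D.pd_Gii (Ne.symm hil)]
  rw [GDv_iik hil, GDv_iik (Ne.symm hil), GDv_ijj hil, GDv_ijj (Ne.symm hil),
    GDv_iji hil]
  rw [sum_split_erase (Ne.symm hil) (fun m => x m * pd l (gam β H i m) x)]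
  have hE := D.E_gam hil
  rw [sum_split2 hil (fun m => x m * pd m (gam β H i l) x)] at hE
  have key : ∑ m ∈ (Finset.univ.erase i).erase l, x m * pd l (gam β H i m) x
      = ∑ m ∈ (Finset.univ.erase i).erase l, x m * pd m (gam β H i l) x := by
    refine Finset.sum_congr rfl (fun m hm => ?_)
    obtain ⟨hml, hmi, -⟩ : m ≠ l ∧ m ≠ i ∧ m ∈ Finset.univ := by
      simpa [Finset.mem_erase] using hm
    rw [D.pd_gam_ne (Ne.symm hmi) (Ne.symm hil) (fun h => hml h.symm),
      D.pd_gam_ne hil hmi hml]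
    ring
  rw [key]
  have h1 := D.hx0 i; have h2 := D.hx0 l
  field_simp
  linear_combination hE

/-- Case F: `k = i`, `l = j`, `i ≠ j`. -/
lemma caseF (D : PtData β H DD x) (hij : i ≠ j) :
    pd i (GammaDual β H i j j) x - pd j (GammaDual β H i i j) x
      + ∑ m, (GammaDual β H i i m x * GammaDual β H m j j x
          - GammaDual β H i j m x * GammaDual β H m i j x) = 0 := by
  rw [GD_ijj hij, D.pd_Gjj hij i, if_pos rfl, if_neg (Ne.symm hij), GD_iik hij]
  rw [sum_split2 hij]
  have hrest : ∑ m ∈ (Finset.univ.erase i).erase j,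
      (GammaDual β H i i m x * GammaDual β H m j j x
        - GammaDual β H i j m x * GammaDual β H m i j x)
      = -((∑ m ∈ (Finset.univ.erase i).erase j,
            x m * gam β H i m x * gam β H m j x) / x j) := by
    have h1 : ∀ m ∈ (Finset.univ.erase i).erase j,
        GammaDual β H i i m x * GammaDual β H m j j x
          - GammaDual β H i j m x * GammaDual β H m i j x
        = -(x m * gam β H i m x * gam β H m j x / x j) := by
      intro m hm
      obtain ⟨hmj, hmi, -⟩ : m ≠ j ∧ m ≠ i ∧ m ∈ Finset.univ := by
        simpa [Finset.mem_erase] using hm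
      rw [GDv_iik (Ne.symm hmi), GDv_ijj hmj, GDv_off hij (Ne.symm hmi) (fun h => hmj h.symm)]
      ring
    rw [Finset.sum_congr rfl h1, Finset.sum_neg_distrib, ← Finset.sum_div]
  rw [hrest]
  rw [GDv_iii (D.hx0 i), GDv_iii (D.hx0 j), GDv_ijj hij, GDv_iji hij, GDv_iik hij,
    GDv_iji (Ne.symm hij)]
  rw [sum_split_erase (Ne.symm hij) (fun m => x m * gam β H i m x)]
  rw [sum_split_erase (i := j) (l := i) hij (fun m => x m * gam β H j m x)]
  rw [show (Finset.univ.erase j).erase i = (Finset.univ.erase i).erase j from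
    Finset.erase_right_comm]
  have hE := D.E_gam hij
  rw [sum_split2 hij (fun m => x m * pd m (gam β H i j) x)] at hE
  have hA : ∑ m ∈ (Finset.univ.erase i).erase j, x m * pd m (gam β H i j) x
      = gam β H i j x * (∑ m ∈ (Finset.univ.erase i).erase j, x m * gam β H j m x)
        + (∑ m ∈ (Finset.univ.erase i).erase j, x m * gam β H i m x * gam β H m j x)
        - gam β H i j x * (∑ m ∈ (Finset.univ.erase i).erase j, x m * gam β H i m x) := by
    have h1 : ∀ m ∈ (Finset.univ.erase i).erase j,
        x m * pd m (gam β H i j) x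
        = gam β H i j x * (x m * gam β H j m x)
          + x m * gam β H i m x * gam β H m j x
          - gam β H i j x * (x m * gam β H i m x) := by
      intro m hm
      obtain ⟨hmj, hmi, -⟩ : m ≠ j ∧ m ≠ i ∧ m ∈ Finset.univ := by
        simpa [Finset.mem_erase] using hm
      rw [D.pd_gam_ne hij hmi hmj]
      ring
    rw [Finset.sum_congr rfl h1, Finset.sum_sub_distrib, Finset.sum_add_distrib,
      ← Finset.mul_sum, ← Finset.mul_sum]
  rw [hA] at hE
  have h1 := D.hx0 i; have h2 := D.hx0 j
  field_simp
  linear_combination (-(x j)) * hE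

end CaseLemmas

section Main
variable {n : ℕ} {β : Fin n → Fin n → (Fin n → ℝ) → ℝ} {H : Fin n → (Fin n → ℝ) → ℝ}
  {DD : Fin n → ℝ} {x : Fin n → ℝ} {i j k l : Fin n}

lemma Rswap (β : Fin n → Fin n → (Fin n → ℝ) → ℝ) (H : Fin n → (Fin n → ℝ) → ℝ)
    (x : Fin n → ℝ) (i j k l : Fin n) :
    pd k (GammaDual β H i l j) x - pd l (GammaDual β H i k j) x
      + ∑ m, (GammaDual β H i k m x * GammaDual β H m l j x
          - GammaDual β H i l m x * GammaDual β H m k j x)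
    = -(pd l (GammaDual β H i k j) x - pd k (GammaDual β H i l j) x
      + ∑ m, (GammaDual β H i l m x * GammaDual β H m k j x
          - GammaDual β H i k m x * GammaDual β H m l j x)) := by
  rw [Finset.sum_sub_distrib, Finset.sum_sub_distrib]
  ring


theorem dual_connection_is_flat {n : ℕ} (hn : 2 ≤ n) (d : Fin n → ℝ)
    (U : Set (Fin n → ℝ)) (hU : IsOpen U)
    (hdist : ∀ x ∈ U, ∀ i j : Fin n, i ≠ j → x i ≠ x j)
    (hnz : ∀ x ∈ U, ∀ i : Fin n, x i ≠ 0)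
    (β : Fin n → Fin n → (Fin n → ℝ) → ℝ)
    (hβ : ∀ i j : Fin n, i ≠ j → ContDiffOn ℝ (⊤ : ℕ∞) (β i j) U)
    (hED1 : ∀ i j k : Fin n, i ≠ j → j ≠ k → i ≠ k →
      ∀ x ∈ U, pd k (β i j) x = β i k x * β k j x)
    (hED2 : ∀ i j : Fin n, i ≠ j → ∀ x ∈ U, ∑ l, pd l (β i j) x = 0)
    (hED3 : ∀ i j : Fin n, i ≠ j → ∀ x ∈ U,
      ∑ l, x l * pd l (β i j) x = (d i - d j - 1) * β i j x)
    (H : Fin n → (Fin n → ℝ) → ℝ)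
    (hH : ∀ i, ContDiffOn ℝ (⊤ : ℕ∞) (H i) U)
    (hH0 : ∀ i, ∀ x ∈ U, H i x ≠ 0)
    (hL1 : ∀ i j : Fin n, i ≠ j → ∀ x ∈ U, pd j (H i) x = β i j x * H j x)
    (hL2 : ∀ i, ∀ x ∈ U, ∑ l, pd l (H i) x = 0)
    (hL3 : ∀ i, ∀ x ∈ U, ∑ l, x l * pd l (H i) x = d i * H i x) :
    ∀ x ∈ U, ∀ i j k l : Fin n,
      pd k (GammaDual β H i l j) x - pd l (GammaDual β H i k j) x
        + ∑ m, (GammaDual β H i k m x * GammaDual β H m l j x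
            - GammaDual β H i l m x * GammaDual β H m k j x) = 0 := by
  intro x hx i j k l
  have D : PtData β H d x :=
    { hHd := fun a => ((hH a).contDiffAt (hU.mem_nhds hx)).differentiableAt (by simp)
      hβd := fun a b hab => ((hβ a b hab).contDiffAt (hU.mem_nhds hx)).differentiableAt (by simp)
      hH0 := fun a => hH0 a x hx
      hx0 := fun a => hnz x hx a
      hpdH := fun a b hab => hL1 a b hab x hx
      hpdβ := fun a b c h1 h2 h3 => hED1 a b c h1 h2 h3 x hx
      hEH := fun a => hL3 a x hx
      hEβ := fun a b hab => hED3 a b hab x hx }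
  by_cases hkl : k = l
  · subst hkl
    rw [sub_self, Finset.sum_eq_zero (fun m _ => sub_self _)]
    ring
  by_cases hij : i = j
  · subst hij
    by_cases hik : i = k
    · subst hik
      exact caseE D (fun h => hkl h)
    by_cases hil : i = l
    · subst hil
      rw [Rswap]
      rw [caseE D (fun h => hik h)]
      ring
    · exact caseB D (fun h => hik h) (fun h => hil h) hkl
  by_cases hik : i = k
  · subst hik
    by_cases hjl : j = l
    · subst hjl
      exact caseF D hij
    · exact caseC D hij (fun h => hkl h) hjl
  by_cases hil : i = l
  · subst hil
    by_cases hjk : j = k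
    · subst hjk
      rw [Rswap, caseF D hij]
      ring
    · rw [Rswap, caseC D hij (fun h => hik h) hjk]
      ring
  by_cases hjk : j = k
  · subst hjk
    exact caseD D hij (fun h => hil h) (fun h => hkl h)
  by_cases hjl : j = l
  · subst hjl
    rw [Rswap, caseD D hij (fun h => hik h) (fun h => hjk h)]
    ring
  · exact caseA D hij (fun h => hik h) (fun h => hil h) hjk hjl hkl
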